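/- arXiv:2110.10647 — 3 statements merged into one kernel-verified Lean document; each statement's English description precedes it below -/
import Mathlib

section
/- With the right eigenvectors r₂ = (0, CaH₃/H₁, −CaH₂/H₁, 0, −H₃, H₂, 0)ᵀ and r₆ = (0, CaH₃/H₁, −CaH₂/H₁, 0, H₃, −H₂, 0)ᵀ, the commutator-type directional derivative satisfies ∇_Φ r₂ · r₆ − ∇_Φ r₆ · r₂ = (0, −2CaH₂/H₁, −2CaH₃/H₁, 0, 0, 0, 0)ᵀ, and consequently the coefficient γ²₂₆ = −(λ₂−λ₆)·l₂·(∇_Φ r₂·r₆ − ∇_Φ r₆·r₂) = (λ₂−λ₆)(H₃H₂/(H₂²+H₃²) − H₂H₃/(H₂²+H₃²)) = 0. -/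
/-!
The Alfvén speed `Ca` depends on `Φ` only through the density coordinate `Φ 3`, which is
constant along both `r₂(Φ)` and `r₆(Φ)`; so `Ca` behaves like a constant in both directional
derivatives, and the commutator reduces to the derivative of the linear `(H₂, H₃)`-dependence
of `r₂, r₆` along `r₆ − r₂ = 2 (0, 0, 0, 0, H₃, −H₂, 0)`. The resulting vector has
`(u₂, u₃)`-part proportional to `(H₂, H₃)`, while `l₂` pairs these components through
`(H₃, −H₂)`, so `l₂ · (∇r₂ · r₆ − ∇r₆ · r₂) = 0`.
-/

open Matrix

section CoordinateDerivatives

variable {ι : Type*} {Φ v : ι → ℝ}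

theorem fderiv_eval_apply (k : ι) : fderiv ℝ (fun ψ : ι → ℝ => ψ k) Φ v = v k := by
  rw [(hasFDerivAt_apply k Φ).fderiv, ContinuousLinearMap.proj_apply]

theorem fderiv_comp_eval_apply [Fintype ι] {h : ℝ → ℝ} {j : ι}
    (hh : DifferentiableAt ℝ h (Φ j)) :
    fderiv ℝ (fun ψ : ι → ℝ => h (ψ j)) Φ v = fderiv ℝ h (Φ j) (v j) := by
  rw [fderiv_fun_comp Φ hh (differentiableAt_apply j Φ), ContinuousLinearMap.comp_apply,
    fderiv_eval_apply]

theorem fderiv_mul_eval_div_const_apply [Fintype ι] {g : (ι → ℝ) → ℝ}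
    (hg : DifferentiableAt ℝ g Φ) (k : ι) (c : ℝ) :
    fderiv ℝ (fun ψ => g ψ * ψ k / c) Φ v = (fderiv ℝ g Φ v * Φ k + g Φ * v k) / c := by
  have hgk : DifferentiableAt ℝ (fun ψ => g ψ * ψ k) Φ :=
    hg.fun_mul (differentiableAt_apply k Φ)
  simp_rw [div_eq_mul_inv]
  rw [fderiv_mul_const hgk, fderiv_fun_mul hg (differentiableAt_apply k Φ)]
  simp only [_root_.smul_apply, _root_.add_apply, fderiv_eval_apply, smul_eq_mul]
  ring

end CoordinateDerivatives

theorem differentiableAt_sqrt_div_add_one {μ x : ℝ} (hμ : 0 < μ) (hx : 0 < x + 1) :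
    DifferentiableAt ℝ (fun y => √(μ / (y + 1))) x :=
  ((differentiableAt_const μ).div (differentiableAt_id.add_const 1) hx.ne').sqrt
    (div_pos hμ hx).ne'

theorem MHD_gamma_2_26_vanishes_general (μ H1 : ℝ) (Φ : Fin 7 → ℝ)
    (hμ : 0 < μ) (hϱ : 0 < Φ 3 + 1) :
    let Ca : (Fin 7 → ℝ) → ℝ := fun ψ => Real.sqrt (μ / (ψ 3 + 1)) * H1
    let R2 : (Fin 7 → ℝ) → Fin 7 → ℝ := fun ψ =>
      ![0, Ca ψ * ψ 5 / H1, -(Ca ψ * ψ 4 / H1), 0, -(ψ 5), ψ 4, 0]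
    let R6 : (Fin 7 → ℝ) → Fin 7 → ℝ := fun ψ =>
      ![0, Ca ψ * ψ 5 / H1, -(Ca ψ * ψ 4 / H1), 0, ψ 5, -(ψ 4), 0]
    let comm : Fin 7 → ℝ := fun i =>
      fderiv ℝ (fun ψ => R2 ψ i) Φ (R6 Φ) - fderiv ℝ (fun ψ => R6 ψ i) Φ (R2 Φ)
    let l2 : Fin 7 → ℝ :=
      ![0, H1 * (Φ 5) / (2 * Ca Φ * ((Φ 4) ^ 2 + (Φ 5) ^ 2)),
        -(H1 * (Φ 4) / (2 * Ca Φ * ((Φ 4) ^ 2 + (Φ 5) ^ 2))),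
        0, -((Φ 5) / (2 * ((Φ 4) ^ 2 + (Φ 5) ^ 2))),
        (Φ 4) / (2 * ((Φ 4) ^ 2 + (Φ 5) ^ 2)), 0]
    let lam2 := Φ 0 + Ca Φ
    let lam6 := Φ 0 - Ca Φ
    comm = ![0, -(2 * Ca Φ * (Φ 4) / H1), -(2 * Ca Φ * (Φ 5) / H1), 0, 0, 0, 0] ∧
    -(lam2 - lam6) * (l2 ⬝ᵥ comm) = 0 := by
  intro Ca R2 R6 comm l2 lam2 lam6
  have hspeed : DifferentiableAt ℝ (fun x => √(μ / (x + 1)) * H1) (Φ 3) :=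
    (differentiableAt_sqrt_div_add_one hμ hϱ).mul_const H1
  have hCa : DifferentiableAt ℝ Ca Φ :=
    hspeed.comp (f := fun ψ : Fin 7 → ℝ => ψ 3) Φ (differentiableAt_apply 3 Φ)
  have hCa_fderiv (v : Fin 7 → ℝ) :
      fderiv ℝ Ca Φ v = fderiv ℝ (fun x => √(μ / (x + 1)) * H1) (Φ 3) (v 3) :=
    fderiv_comp_eval_apply hspeed
  have hcomm : comm = ![0, -(2 * Ca Φ * (Φ 4) / H1), -(2 * Ca Φ * (Φ 5) / H1), 0, 0, 0, 0] := by
    funext i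
    fin_cases i <;>
      simp only [comm, R2, R6, Fin.zero_eta, Fin.mk_one, Fin.reduceFinMk, Matrix.cons_val,
        fderiv_const_apply, _root_.zero_apply, fderiv_fun_neg, _root_.neg_apply,
        fderiv_eval_apply, fderiv_mul_eval_div_const_apply hCa, hCa_fderiv, map_zero] <;> ring
  have hl2 : l2 ⬝ᵥ comm = 0 := by
    rw [hcomm]
    simp only [dotProduct, Fin.sum_univ_seven, l2, Matrix.cons_val]
    ring
  exact ⟨hcomm, by rw [hl2, mul_zero]⟩

/-- With the right-eigenvector fields `r₂(Φ), r₆(Φ)` of the planar MHD system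
(`Φ = (u₁,u₂,u₃,ϱ−1,H₂,H₃,S)`, `Ca = √(μ₀/ϱ)H₁`), the commutator-type directional
derivative satisfies `∇_Φ r₂ · r₆ − ∇_Φ r₆ · r₂ = (0, −2CaH₂/H₁, −2CaH₃/H₁, 0,0,0,0)ᵀ`,
and consequently `γ²₂₆ = −(λ₂−λ₆)·l₂·(∇_Φ r₂·r₆ − ∇_Φ r₆·r₂) = 0`. -/
theorem MHD_gamma_2_26_vanishes (μ H1 : ℝ) (Φ : Fin 7 → ℝ)
    (hμ : 0 < μ) (hH1 : H1 ≠ 0) (hϱ : 0 < Φ 3 + 1) (hs : 0 < (Φ 4) ^ 2 + (Φ 5) ^ 2) :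
    let Ca : (Fin 7 → ℝ) → ℝ := fun ψ => Real.sqrt (μ / (ψ 3 + 1)) * H1
    let R2 : (Fin 7 → ℝ) → Fin 7 → ℝ := fun ψ =>
      ![0, Ca ψ * ψ 5 / H1, -(Ca ψ * ψ 4 / H1), 0, -(ψ 5), ψ 4, 0]
    let R6 : (Fin 7 → ℝ) → Fin 7 → ℝ := fun ψ =>
      ![0, Ca ψ * ψ 5 / H1, -(Ca ψ * ψ 4 / H1), 0, ψ 5, -(ψ 4), 0]
    let comm : Fin 7 → ℝ := fun i =>
      fderiv ℝ (fun ψ => R2 ψ i) Φ (R6 Φ) - fderiv ℝ (fun ψ => R6 ψ i) Φ (R2 Φ)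
    let l2 : Fin 7 → ℝ :=
      ![0, H1 * (Φ 5) / (2 * Ca Φ * ((Φ 4) ^ 2 + (Φ 5) ^ 2)),
        -(H1 * (Φ 4) / (2 * Ca Φ * ((Φ 4) ^ 2 + (Φ 5) ^ 2))),
        0, -((Φ 5) / (2 * ((Φ 4) ^ 2 + (Φ 5) ^ 2))),
        (Φ 4) / (2 * ((Φ 4) ^ 2 + (Φ 5) ^ 2)), 0]
    let lam2 := Φ 0 + Ca Φ
    let lam6 := Φ 0 - Ca Φ
    comm = ![0, -(2 * Ca Φ * (Φ 4) / H1), -(2 * Ca Φ * (Φ 5) / H1), 0, 0, 0, 0] ∧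
    -(lam2 - lam6) * (l2 ⬝ᵥ comm) = 0 :=
  MHD_gamma_2_26_vanishes_general μ H1 Φ hμ hϱ
end

section
/- When H₁ = 0 the planar MHD system's genuine nonlinearity coefficient is c¹₁₁(Φ) = −(1/2 + γc²/(2Cf²) + μ₀(H₂²+H₃²)/(ϱCf²)), which is strictly negative for all Φ with ϱ > 0 and c > 0, where Cf² = μ₀(H₂²+H₃²)/ϱ + c². -/
/-!
Along `r₁` the velocity `u₁` decreases at unit speed, `S` is fixed and `(ϱ, H₂, H₃)` is scaled
by `s = 1 - t / Cf`. The two summands of `Cf² = μ₀(H₂² + H₃²)/ϱ + c²` are homogeneous of degrees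
`1` and `γ - 1` under this scaling, so on the line `λ₁ = u₁ - t + √(s μ₀(H₂² + H₃²)/ϱ + s^(γ-1) c²)`,
with derivative `-1 - (μ₀(H₂² + H₃²)/ϱ + (γ - 1) c²) / (2 Cf²)` at `t = 0`.
-/
open Real Filter Topology

noncomputable def magneticSpeedSq (μ ϱ H₂ H₃ : ℝ) : ℝ := μ * (H₂ ^ 2 + H₃ ^ 2) / ϱ

noncomputable def soundSpeedSq (A γ ϱ S : ℝ) : ℝ := A * γ * ϱ ^ (γ - 1) * exp S

noncomputable def fastSpeedSq (A γ μ ϱ H₂ H₃ S : ℝ) : ℝ :=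
  magneticSpeedSq μ ϱ H₂ H₃ + soundSpeedSq A γ ϱ S

lemma fastSpeedSq_smul (A γ μ H₂ H₃ S : ℝ) {ϱ s : ℝ} (hϱ : 0 ≤ ϱ) (hs : 0 < s) :
    fastSpeedSq A γ μ (s * ϱ) (s * H₂) (s * H₃) S
      = s * magneticSpeedSq μ ϱ H₂ H₃ + s ^ (γ - 1) * soundSpeedSq A γ ϱ S := by
  unfold fastSpeedSq magneticSpeedSq soundSpeedSq
  rw [mul_rpow hs.le hϱ]
  field_simp

lemma hasDerivAt_sqrt_mul_add_rpow_mul (m c p C : ℝ) (h : 0 < m + c) :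
    HasDerivAt (fun t => √((1 - t / C) * m + (1 - t / C) ^ p * c))
      (-(m + p * c) / (2 * C * √(m + c))) 0 := by
  have hs : HasDerivAt (fun t : ℝ => 1 - t / C) (-C⁻¹) 0 := by
    simpa using ((hasDerivAt_id (0 : ℝ)).div_const C).const_sub 1
  convert ((hs.mul_const m).add ((hs.rpow_const (p := p) (by simp)).mul_const c)).sqrt
    (by simpa using h.ne') using 1 <;> simp
  field_simp
  ring

lemma differentiableAt_add_sqrt_fastSpeedSq (A γ μ : ℝ) {Φ : Fin 7 → ℝ} (hϱ : Φ 3 + 1 ≠ 0)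
    (hCf : fastSpeedSq A γ μ (Φ 3 + 1) (Φ 4) (Φ 5) (Φ 6) ≠ 0) :
    DifferentiableAt ℝ
      (fun ψ : Fin 7 → ℝ => ψ 0 + √(fastSpeedSq A γ μ (ψ 3 + 1) (ψ 4) (ψ 5) (ψ 6))) Φ := by
  unfold fastSpeedSq magneticSpeedSq soundSpeedSq at *
  fun_prop (disch := assumption)

lemma hasLineDerivAt_add_sqrt_fastSpeedSq (A γ μ C : ℝ) {Φ : Fin 7 → ℝ} (hϱ : 0 < Φ 3 + 1)
    (hCf : 0 < fastSpeedSq A γ μ (Φ 3 + 1) (Φ 4) (Φ 5) (Φ 6)) :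
    HasLineDerivAt ℝ
      (fun ψ : Fin 7 → ℝ => ψ 0 + √(fastSpeedSq A γ μ (ψ 3 + 1) (ψ 4) (ψ 5) (ψ 6)))
      (-1 - (magneticSpeedSq μ (Φ 3 + 1) (Φ 4) (Φ 5) + (γ - 1) * soundSpeedSq A γ (Φ 3 + 1) (Φ 6))
        / (2 * C * √(fastSpeedSq A γ μ (Φ 3 + 1) (Φ 4) (Φ 5) (Φ 6))))
      Φ ![-1, 0, 0, -((Φ 3 + 1) / C), -(Φ 4 / C), -(Φ 5 / C), 0] := by
  have hs : ∀ᶠ t in 𝓝 (0 : ℝ), 0 < 1 - t / C :=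
    (show Continuous fun t : ℝ => 1 - t / C by fun_prop).continuousAt.eventually
      (lt_mem_nhds (by simp))
  refine (((hasDerivAt_id 0).const_sub (Φ 0)).add
    (hasDerivAt_sqrt_mul_add_rpow_mul _ _ (γ - 1) C hCf)).congr_of_eventuallyEq ?_
    |>.congr_deriv (by unfold fastSpeedSq; ring)
  filter_upwards [hs] with t ht
  have hline : Φ + t • ![-1, 0, 0, -((Φ 3 + 1) / C), -(Φ 4 / C), -(Φ 5 / C), 0]
      = ![Φ 0 - t, Φ 1, Φ 2, (1 - t / C) * (Φ 3 + 1) - 1, (1 - t / C) * Φ 4,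
          (1 - t / C) * Φ 5, Φ 6] := by
    ext i; fin_cases i <;> simp <;> ring
  simp only [hline, Matrix.cons_val, sub_add_cancel, fastSpeedSq_smul _ _ _ _ _ _ hϱ.le ht]
  rfl

/-- When `H₁ = 0`, with `λ₁(Φ) = u₁ + Cf`, `Cf = √(μ₀(H₂²+H₃²)/ϱ + c²)`,
`c² = Aγϱ^{γ−1}e^S`, and `r₁ = (−1,0,0,−ϱ/Cf,−H₂/Cf,−H₃/Cf,0)ᵀ`, the genuine
nonlinearity coefficient is
`c¹₁₁(Φ) = ∇_Φλ₁·r₁ = −(1/2 + γc²/(2Cf²) + μ₀(H₂²+H₃²)/(ϱCf²))`, which is strictly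
negative. -/
theorem MHD_c111_formula (A γ μ : ℝ) (hA : 0 < A) (hγ : 1 < γ) (hμ : 0 < μ)
    (Φ : Fin 7 → ℝ) (hϱ : 0 < Φ 3 + 1) :
    let ϱ := Φ 3 + 1
    let c2 := A * γ * ϱ ^ (γ - 1) * Real.exp (Φ 6)
    let Cf2 := μ * ((Φ 4) ^ 2 + (Φ 5) ^ 2) / ϱ + c2
    let Cf := Real.sqrt Cf2
    let lam1 : (Fin 7 → ℝ) → ℝ := fun ψ => ψ 0 +
      Real.sqrt (μ * ((ψ 4) ^ 2 + (ψ 5) ^ 2) / (ψ 3 + 1)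
        + A * γ * (ψ 3 + 1) ^ (γ - 1) * Real.exp (ψ 6))
    let r1 : Fin 7 → ℝ := ![-1, 0, 0, -(ϱ / Cf), -(Φ 4 / Cf), -(Φ 5 / Cf), 0]
    fderiv ℝ lam1 Φ r1
        = -(1 / 2 + γ * c2 / (2 * Cf2) + μ * ((Φ 4) ^ 2 + (Φ 5) ^ 2) / (ϱ * Cf2)) ∧
    -(1 / 2 + γ * c2 / (2 * Cf2) + μ * ((Φ 4) ^ 2 + (Φ 5) ^ 2) / (ϱ * Cf2)) < 0 := by
  intro ϱ c2 Cf2 Cf lam1 r1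
  have hCf2 : 0 < Cf2 := by positivity
  have hdiff : DifferentiableAt ℝ lam1 Φ :=
    differentiableAt_add_sqrt_fastSpeedSq A γ μ hϱ.ne' hCf2.ne'
  have hderiv : HasLineDerivAt ℝ lam1 (-1 - (μ * ((Φ 4) ^ 2 + (Φ 5) ^ 2) / ϱ + (γ - 1) * c2)
      / (2 * Cf * Cf)) Φ r1 :=
    hasLineDerivAt_add_sqrt_fastSpeedSq A γ μ Cf hϱ hCf2
  refine ⟨?_, ?_⟩
  · rw [← hdiff.lineDeriv_eq_fderiv, hderiv.lineDeriv, mul_assoc, mul_self_sqrt hCf2.le]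
    field_simp
    ring
  · have hmagnetic : 0 ≤ μ * ((Φ 4) ^ 2 + (Φ 5) ^ 2) / (ϱ * Cf2) := by positivity
    have hsound : 0 < γ * c2 / (2 * Cf2) := by positivity
    linarith
end

section
/- For the planar MHD matrix with H₁ = 0, the 7×7 matrix A(Φ) with first row (u₁,0,0,c²/ϱ,μ₀H₂/ϱ,μ₀H₃/ϱ,∂_Sp/ϱ), fourth row (ϱ,0,0,u₁,0,0,0), fifth row (H₂,0,0,0,u₁,0,0), sixth row (H₃,0,0,0,0,u₁,0), and remaining diagonal entries u₁, has eigenvalues u₁+Cf, u₁ (with algebraic and geometric multiplicity 5), and u₁−Cf, where Cf = {μ₀(H₂²+H₃²)/ϱ + c²}^{1/2}; in particular A(Φ) is diagonalizable with the 7 explicit eigenvectors r₁ = (−1,0,0,−ϱ/Cf,−H₂/Cf,−H₃/Cf,0)ᵀ, r₂ = e₂, r₃ = e₃, r₄ = (0,0,0,−∂_Sp/c²,0,0,1)ᵀ, r₅ = (0,0,0,−μ₀H₂/c²,1,0,0)ᵀ, r₆ = (0,0,0,−μ₀H₃/c²,0,1,0)ᵀ, r₇ = (−1,0,0,ϱ/Cf,H₂/Cf,H₃/Cf,0)ᵀ.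 -/
/-!
Write `A = u₁ I + N`, where `N` vanishes outside its first row `a` and first column
`b = (0, 0, 0, ϱ, H₂, H₃, 0)`, so that `N v = (a ⬝ v) e₁ + v₁ b`. Thus `N` kills every `v` with
`v₁ = 0` and `a ⬝ v = 0`, which yields the five eigenvectors for `u₁`, while on `span {e₁, b}` it
acts by `e₁ ↦ b`, `b ↦ (a ⬝ b) e₁` with `a ⬝ b = Cf²`, so `-e₁ ∓ b / Cf` are eigenvectors for `±Cf`.
In a vanishing combination of `r₁, …, r₇` the pivot coordinates of `r₂, …, r₆` express all
coefficients through that of `r₁`, which is then killed by `ϱ c² + μ₀ (H₂² + H₃²) = ϱ Cf² ≠ 0`.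
-/

open Matrix

namespace PlanarMHD

noncomputable def matrix (u1 ϱ c2 pS μ H2 H3 : ℝ) : Matrix (Fin 7) (Fin 7) ℝ :=
  !![u1, 0, 0, c2 / ϱ, μ * H2 / ϱ, μ * H3 / ϱ, pS / ϱ;
     0, u1, 0, 0, 0, 0, 0;
     0, 0, u1, 0, 0, 0, 0;
     ϱ, 0, 0, u1, 0, 0, 0;
     H2, 0, 0, 0, u1, 0, 0;
     H3, 0, 0, 0, 0, u1, 0;
     0, 0, 0, 0, 0, 0, u1]

variable {u1 ϱ c2 pS μ H2 H3 : ℝ}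

theorem matrix_mulVec (v : Fin 7 → ℝ) :
    matrix u1 ϱ c2 pS μ H2 H3 *ᵥ v = u1 • v +
      ![(c2 * v 3 + μ * H2 * v 4 + μ * H3 * v 5 + pS * v 6) / ϱ, 0, 0,
        ϱ * v 0, H2 * v 0, H3 * v 0, 0] := by
  ext i
  fin_cases i <;>
    simp only [matrix, mulVec, dotProduct, Fin.sum_univ_seven, of_apply, Fin.isValue, Fin.zero_eta,
      Fin.mk_one, Fin.reduceFinMk, cons_val, cons_val_zero, cons_val_one, Pi.add_apply,
      Pi.smul_apply, smul_eq_mul] <;>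
    ring

theorem matrix_mulVec_eq_smul_of_apply_zero (v : Fin 7 → ℝ) (h0 : v 0 = 0)
    (h : c2 * v 3 + μ * H2 * v 4 + μ * H3 * v 5 + pS * v 6 = 0) :
    matrix u1 ϱ c2 pS μ H2 H3 *ᵥ v = u1 • v := by
  rw [matrix_mulVec, h, h0]
  simp only [zero_div, mul_zero, ← Matrix.zero_empty, Matrix.cons_zero_zero, add_zero]

theorem matrix_mulVec_magnetosonic {C : ℝ} (hϱ : ϱ ≠ 0) (hC0 : C ≠ 0)
    (hC : ϱ * C ^ 2 = ϱ * c2 + μ * (H2 ^ 2 + H3 ^ 2)) :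
    matrix u1 ϱ c2 pS μ H2 H3 *ᵥ ![-1, 0, 0, -(ϱ / C), -(H2 / C), -(H3 / C), 0] =
      (u1 + C) • ![-1, 0, 0, -(ϱ / C), -(H2 / C), -(H3 / C), 0] := by
  rw [matrix_mulVec]
  ext i
  fin_cases i <;>
    simp only [Fin.isValue, Fin.zero_eta, Fin.mk_one, Fin.reduceFinMk, cons_val, cons_val_zero,
      cons_val_one, Pi.add_apply, Pi.smul_apply, smul_cons, smul_empty, smul_eq_mul, mul_neg,
      mul_one, mul_zero, add_zero, neg_add_rev] <;>
    field_simp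
  · linear_combination hC
  all_goals ring

theorem linearIndependent_eigenvectors {C : ℝ} (hc2 : c2 ≠ 0) (hC0 : C ≠ 0)
    (hD : ϱ * c2 + μ * (H2 ^ 2 + H3 ^ 2) ≠ 0) :
    LinearIndependent ℝ ![![-1, 0, 0, -(ϱ / C), -(H2 / C), -(H3 / C), 0],
      ![0, 1, 0, 0, 0, 0, 0], ![0, 0, 1, 0, 0, 0, 0], ![0, 0, 0, -(pS / c2), 0, 0, 1],
      ![0, 0, 0, -(μ * H2 / c2), 1, 0, 0], ![0, 0, 0, -(μ * H3 / c2), 0, 1, 0],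
      ![-1, 0, 0, ϱ / C, H2 / C, H3 / C, 0]] := by
  rw [Fintype.linearIndependent_iff]
  intro g hg
  simp only [Fin.sum_univ_seven, Fin.isValue, cons_val_zero, smul_cons, smul_eq_mul, mul_neg,
    mul_one, mul_zero, smul_empty, cons_val_one, add_cons, head_cons, add_zero, tail_cons,
    zero_add, empty_add_empty, cons_val, funext_iff, Pi.zero_apply, Fin.forall_fin_succ,
    cons_val_succ, cons_val_fin_one, forall_const] at hg
  obtain ⟨h0, h1, h2, h3, h4, h5, h6⟩ := hg
  have hg0 : g 0 = 0 := by
    have key : g 0 * (ϱ * c2 + μ * (H2 ^ 2 + H3 ^ 2)) = 0 := by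
      linear_combination (norm := skip) (-c2 * C / 2) * h3 + (-μ * H2 * C / 2) * h4
        + (-μ * H3 * C / 2) * h5 - ((ϱ * c2 + μ * (H2 ^ 2 + H3 ^ 2)) / 2) * h0 - (pS * C / 2) * h6
      field_simp
      ring
    simpa [hD] using key
  have hg6 : g 6 = 0 := by linear_combination -h0 - hg0
  have hg4 : g 4 = 0 := by linear_combination h4 + (H2 / C) * hg0 - (H2 / C) * hg6
  have hg5 : g 5 = 0 := by linear_combination h5 + (H3 / C) * hg0 - (H3 / C) * hg6
  intro i
  fin_cases i <;> assumption

end PlanarMHD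

open PlanarMHD in
/-- For `H₁ = 0`, the planar MHD matrix has eigenvalues `u₁+Cf`, `u₁`
(with multiplicity 5) and `u₁−Cf`, `Cf = √(μ₀(H₂²+H₃²)/ϱ + c²)`; it is diagonalizable
with the seven explicit eigenvectors `r₁,…,r₇`, which are linearly independent. -/
theorem MHD_H1_zero_diagonalizable (u1 ϱ c2 pS μ H2 H3 : ℝ)
    (hϱ : 0 < ϱ) (hc2 : 0 < c2) (hμ : 0 < μ) :
    let Cf := Real.sqrt (μ * (H2 ^ 2 + H3 ^ 2) / ϱ + c2)
    let A : Matrix (Fin 7) (Fin 7) ℝ :=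
      !![u1, 0, 0, c2 / ϱ, μ * H2 / ϱ, μ * H3 / ϱ, pS / ϱ;
         0, u1, 0, 0, 0, 0, 0;
         0, 0, u1, 0, 0, 0, 0;
         ϱ, 0, 0, u1, 0, 0, 0;
         H2, 0, 0, 0, u1, 0, 0;
         H3, 0, 0, 0, 0, u1, 0;
         0, 0, 0, 0, 0, 0, u1]
    let r1 : Fin 7 → ℝ := ![-1, 0, 0, -(ϱ / Cf), -(H2 / Cf), -(H3 / Cf), 0]
    let r2 : Fin 7 → ℝ := ![0, 1, 0, 0, 0, 0, 0]
    let r3 : Fin 7 → ℝ := ![0, 0, 1, 0, 0, 0, 0]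
    let r4 : Fin 7 → ℝ := ![0, 0, 0, -(pS / c2), 0, 0, 1]
    let r5 : Fin 7 → ℝ := ![0, 0, 0, -(μ * H2 / c2), 1, 0, 0]
    let r6 : Fin 7 → ℝ := ![0, 0, 0, -(μ * H3 / c2), 0, 1, 0]
    let r7 : Fin 7 → ℝ := ![-1, 0, 0, ϱ / Cf, H2 / Cf, H3 / Cf, 0]
    A.mulVec r1 = (u1 + Cf) • r1 ∧
    A.mulVec r2 = u1 • r2 ∧
    A.mulVec r3 = u1 • r3 ∧
    A.mulVec r4 = u1 • r4 ∧
    A.mulVec r5 = u1 • r5 ∧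
    A.mulVec r6 = u1 • r6 ∧
    A.mulVec r7 = (u1 - Cf) • r7 ∧
    LinearIndependent ℝ ![r1, r2, r3, r4, r5, r6, r7] := by
  intro Cf A r1 r2 r3 r4 r5 r6 r7
  have hCf : 0 < Cf := Real.sqrt_pos.mpr (by positivity)
  have hCf_sq : ϱ * Cf ^ 2 = ϱ * c2 + μ * (H2 ^ 2 + H3 ^ 2) := by
    rw [Real.sq_sqrt (by positivity)]
    field_simp
    ring
  refine ⟨matrix_mulVec_magnetosonic hϱ.ne' hCf.ne' hCf_sq, ?_, ?_, ?_, ?_, ?_, ?_,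
    linearIndependent_eigenvectors hc2.ne' hCf.ne' (by positivity)⟩
  · exact matrix_mulVec_eq_smul_of_apply_zero r2 rfl (by simp [r2])
  · exact matrix_mulVec_eq_smul_of_apply_zero r3 rfl (by simp [r3])
  · exact matrix_mulVec_eq_smul_of_apply_zero r4 rfl (by simp [r4, mul_div_cancel₀, hc2.ne'])
  · exact matrix_mulVec_eq_smul_of_apply_zero r5 rfl (by simp [r5, mul_div_cancel₀, hc2.ne'])
  · exact matrix_mulVec_eq_smul_of_apply_zero r6 rfl (by simp [r6, mul_div_cancel₀, hc2.ne'])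
  -- `r₇` is `r₁` with `Cf` replaced by `-Cf`.
  have hCf_sq' : ϱ * (-Cf) ^ 2 = ϱ * c2 + μ * (H2 ^ 2 + H3 ^ 2) := by rwa [neg_sq]
  have h7 :=
    matrix_mulVec_magnetosonic (u1 := u1) (pS := pS) hϱ.ne' (neg_ne_zero.mpr hCf.ne') hCf_sq'
  simp only [div_neg, neg_neg, ← sub_eq_add_neg] at h7
  exact h7
end
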